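/- arXiv:1403.2767 — 2 statements merged into one kernel-verified Lean document; each statement's English description precedes it below -/
import Mathlib

section
/- Define Q_R: (0,∞)∖ℚ → (0,∞)∖ℚ by Q_R(w) = 1/w - 1 if w < 1 and Q_R(w) = w - 1 if w > 1, and for w ∈ (0,1)∖ℚ define E_R(w) = Q_R^{⌊1/w⌋}(w) (the ⌊1/w⌋-fold iterate). Then E_R(w) = 1/w - ⌊1/w⌋, i.e. the era-to-era map equals the Gauss map. -/
/-- The epoch-to-epoch map on the BKL parameter `w`. -/
noncomputable def QR (x : ℝ) : ℝ := if x < 1 then 1/x - 1 else x - 1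

lemma QR_iter (m : ℕ) : ∀ x : ℝ, (m : ℝ) < x → x < m + 1 → QR^[m] x = x - m := by
  induction m with
  | zero => intro x _ _; simp
  | succ m ih =>
    intro x h1 h2
    have hm1 : (1:ℝ) ≤ (m:ℝ) + 1 := by have := Nat.cast_nonneg (α := ℝ) m; linarith
    have hx1 : ¬ x < 1 := by push_cast at h1; linarith
    rw [Function.iterate_succ_apply, QR, if_neg hx1]
    rw [ih (x - 1) (by push_cast at h1 ⊢; linarith) (by push_cast at h2 ⊢; linarith)]
    push_cast; ring

/-- Iterating the epoch-to-epoch map `⌊1/w⌋` times starting from an irrational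
`w ∈ (0,1)` yields the Gauss map. -/
theorem stmt_5 (w : ℝ) (hw : w ∈ Set.Ioo (0:ℝ) 1) (hirr : Irrational w) :
    QR^[⌊1/w⌋₊] w = 1/w - (⌊1/w⌋₊ : ℝ) := by
  obtain ⟨hw0, hw1⟩ := hw
  have hinv : 1 < 1/w := (one_lt_div hw0).mpr hw1
  have hirr' : Irrational (1/w) := by
    rw [one_div]; exact hirr.inv
  set n := ⌊1/w⌋₊ with hn
  have hn1 : 1 ≤ n := Nat.le_floor (by push_cast; linarith)
  have hfl : (n : ℝ) ≤ 1/w := Nat.floor_le (by positivity)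
  have hfu : 1/w < n + 1 := Nat.lt_floor_add_one _
  have hne : (1/w) ≠ (n : ℝ) := (hirr'.ne_nat n)
  have hfl' : (n : ℝ) < 1/w := lt_of_le_of_ne hfl (Ne.symm hne)
  clear_value n
  obtain ⟨m, rfl⟩ : ∃ m, n = m + 1 := ⟨n - 1, (Nat.succ_pred_eq_of_pos hn1).symm⟩
  rw [Function.iterate_succ_apply, QR, if_pos hw1]
  rw [QR_iter m (1/w - 1) (by push_cast at hfl' ⊢; linarith) (by push_cast at hfu ⊢; linarith)]
  push_cast; ring
end

section
/- Let (k_n)_{n∈ℤ} be strictly positive integers, w_n = ⟨k_{n+1},k_{n+2},...⟩ and p_n defined by 1/(1+p_n) = ⟨k_n,k_{n-1},...⟩. Set a_l = -1/(w_l(1+p_l)). Then for all integers n ≥ m ≥ 0: (1/2) ≤ (w_{n-1}/w_{m-1})·(-1)^{m+n}·a_{n-1}···a_m ≤ 2. -/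
/-!
With `u_l = ⟨k_l, k_{l-1}, …⟩` we have `a_l = -u_l / w_l`, and after telescoping the `w`'s the
quantity to bound is `(∏_{l=m}^{n-1} u_l) / (∏_{l=m-1}^{n-2} w_l)`. Both products are
reciprocals of continuants of `k_m, …, k_{n-1}` with one end entry perturbed by a tail in `(0, 1)`:
`∏ u = 1 / (A + u_{m-1} B)` and `∏ w = 1 / (A + w_{n-1} C)`, where `A = K(k_m, …, k_{n-1})`,
`B = K(k_{m+1}, …, k_{n-1})` and `C = K(k_m, …, k_{n-2})`. Since `B, C ≤ A`, both denominators
lie in `[A, 2A]`, so their ratio lies in `[1/2, 2]`.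
-/

open Finset

/-- `continuant c (j + 1)` is the continuant `K(c 0, …, c (j - 1))`; the extra initial value
`continuant c 0 = 0` makes the three-term recursion hold from the start. -/
def continuant (c : ℕ → ℝ) : ℕ → ℝ
  | 0 => 0
  | 1 => 1
  | j + 2 => c j * continuant c (j + 1) + continuant c j

section Continuant

variable {c : ℕ → ℝ}

theorem continuant_add_two (j : ℕ) :
    continuant c (j + 2) = c j * continuant c (j + 1) + continuant c j := rfl

theorem continuant_nonneg (hc : ∀ i, 0 ≤ c i) : ∀ j, 0 ≤ continuant c j
  | 0 => le_rfl
  | 1 => zero_le_one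
  | j + 2 =>
    add_nonneg (mul_nonneg (hc j) (continuant_nonneg hc (j + 1))) (continuant_nonneg hc j)

theorem continuant_le_continuant_succ (hc : ∀ i, 1 ≤ c i) :
    ∀ j, continuant c j ≤ continuant c (j + 1)
  | 0 => zero_le_one
  | j + 1 => by
    have hc0 : ∀ i, 0 ≤ c i := fun i => zero_le_one.trans (hc i)
    have := continuant_nonneg hc0 j
    have := continuant_nonneg hc0 (j + 1)
    rw [continuant_add_two]
    nlinarith [hc j]

theorem one_le_continuant_succ (hc : ∀ i, 1 ≤ c i) : ∀ j, 1 ≤ continuant c (j + 1)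
  | 0 => le_rfl
  | j + 1 => (one_le_continuant_succ hc j).trans (continuant_le_continuant_succ hc (j + 1))

theorem continuant_tail_le (hc : ∀ i, 1 ≤ c i) :
    ∀ j, continuant (fun i => c (i + 1)) j ≤ continuant c (j + 1)
  | 0 => zero_le_one
  | 1 => by simpa [continuant] using hc 0
  | j + 2 => by
    have hc0 : 0 ≤ c (j + 1) := zero_le_one.trans (hc (j + 1))
    calc continuant (fun i => c (i + 1)) (j + 2)
        = c (j + 1) * continuant (fun i => c (i + 1)) (j + 1)
          + continuant (fun i => c (i + 1)) j := rfl
      _ ≤ c (j + 1) * continuant c (j + 2) + continuant c (j + 1) := by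
        gcongr
        exacts [continuant_tail_le hc (j + 1), continuant_tail_le hc j]
      _ = continuant c (j + 3) := rfl

end Continuant

theorem prod_Ioc_add_natCast {M : Type*} [CommMonoid M] (f : ℤ → M) (m : ℤ) (j : ℕ) :
    ∏ l ∈ Ioc m (m + j), f l = ∏ i ∈ range j, f (m + (i + 1 : ℕ)) := by
  induction j with
  | zero => simp
  | succ j ih =>
    rw [prod_range_succ, ← ih, Nat.cast_succ, ← add_assoc,
      ← insert_Ioc_right_eq_Ioc_add_one (by omega), prod_insert (by simp), mul_comm]

theorem add_mul_div_add_mul_mem_Icc {A B C s t : ℝ} (hA : 0 < A) (hB : 0 ≤ B) (hBA : B ≤ A)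
    (hC : 0 ≤ C) (hCA : C ≤ A) (hs : s ∈ Set.Icc (0 : ℝ) 1) (ht : t ∈ Set.Icc (0 : ℝ) 1) :
    (A + s * C) / (A + t * B) ∈ Set.Icc (1 / 2 : ℝ) 2 := by
  have hsC : s * C ≤ A := (mul_le_of_le_one_left hC hs.2).trans hCA
  have htB : t * B ≤ A := (mul_le_of_le_one_left hB ht.2).trans hBA
  have hsC₀ : 0 ≤ s * C := mul_nonneg hs.1 hC
  have htB₀ : 0 ≤ t * B := mul_nonneg ht.1 hB
  have hden : 0 < A + t * B := by linarith
  constructor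
  · rw [le_div_iff₀ hden]; linarith
  · rw [div_le_iff₀ hden]; linarith

section Tails

-- `x i` and `y i` stand for the tails `u_{m-1+i}` and `w_{m-1+i}`, and `c i` for `k_{m+i}`.
variable {c x y : ℕ → ℝ}

theorem mul_continuant_backward_succ (hx : ∀ i, x (i + 1) * (c i + x i) = 1) :
    ∀ j, x (j + 1) * (continuant c (j + 2) + x 0 * continuant (fun i => c (i + 1)) (j + 1))
      = continuant c (j + 1) + x 0 * continuant (fun i => c (i + 1)) j
  | 0 => by simpa [continuant] using hx 0
  | j + 1 => by
    have ih := mul_continuant_backward_succ hx j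
    rw [continuant_add_two, continuant_add_two (c := fun i => c (i + 1))]
    linear_combination
      (continuant c (j + 2) + x 0 * continuant (fun i => c (i + 1)) (j + 1)) * hx (j + 1)
        - x (j + 2) * ih

theorem prod_mul_continuant_backward (hx : ∀ i, x (i + 1) * (c i + x i) = 1) (j : ℕ) :
    (∏ i ∈ range j, x (i + 1))
      * (continuant c (j + 1) + x 0 * continuant (fun i => c (i + 1)) j) = 1 := by
  induction j with
  | zero => simp [continuant]
  | succ j ih =>
    rw [prod_range_succ, mul_assoc, mul_continuant_backward_succ hx, ih]

theorem prod_mul_continuant_forward (hy : ∀ i, y i * (c i + y (i + 1)) = 1) (j : ℕ) :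
    (∏ i ∈ range j, y i) * (continuant c (j + 1) + y j * continuant c j) = 1 := by
  induction j with
  | zero => simp [continuant]
  | succ j ih =>
    rw [prod_range_succ, continuant_add_two]
    linear_combination (∏ i ∈ range j, y i) * continuant c (j + 1) * hy j + ih

theorem div_mul_prod_div_mem_Icc (hc : ∀ i, 1 ≤ c i) (hx : ∀ i, x i ∈ Set.Icc (0 : ℝ) 1)
    (hy : ∀ i, y i ∈ Set.Icc (0 : ℝ) 1) (hxrec : ∀ i, x (i + 1) * (c i + x i) = 1)
    (hyrec : ∀ i, y i * (c i + y (i + 1)) = 1) (j : ℕ) :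
    y j / y 0 * ∏ i ∈ range j, (x (i + 1) / y (i + 1)) ∈ Set.Icc (1 / 2 : ℝ) 2 := by
  have hy₀ : ∀ i, y i ≠ 0 := fun i => left_ne_zero_of_mul_eq_one (hyrec i)
  have htel : y j / y 0 * ∏ i ∈ range j, (x (i + 1) / y (i + 1))
      = (∏ i ∈ range j, x (i + 1)) / ∏ i ∈ range j, y i := by
    have h := (prod_range_succ y j).symm.trans (prod_range_succ' y j)
    have := prod_ne_zero_iff.mpr fun i (_ : i ∈ range j) => hy₀ i
    have := prod_ne_zero_iff.mpr fun i (_ : i ∈ range j) => hy₀ (i + 1)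
    rw [prod_div_distrib]
    field_simp [hy₀]
    linear_combination (∏ i ∈ range j, x (i + 1)) * h
  have hc₀ : ∀ i, 0 ≤ c i := fun i => zero_le_one.trans (hc i)
  rw [htel, eq_inv_of_mul_eq_one_left (prod_mul_continuant_backward hxrec j),
    eq_inv_of_mul_eq_one_left (prod_mul_continuant_forward hyrec j), inv_div_inv]
  exact add_mul_div_add_mul_mem_Icc (zero_lt_one.trans_le (one_le_continuant_succ hc j))
    (continuant_nonneg (fun i => hc₀ (i + 1)) j) (continuant_tail_le hc j)
    (continuant_nonneg hc₀ j) (continuant_le_continuant_succ hc j) (hy j) (hx 0)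

end Tails

/-- Bounds on products of `a_l = -1/(w_l (1+p_l))`, where `w n = ⟨k (n+1), k (n+2), ...⟩`
and `1/(1+p n) = u n = ⟨k n, k (n-1), ...⟩` are continued fractions characterized by
their recursions. -/
theorem stmt_10 (k : ℤ → ℤ) (hk : ∀ n, 0 < k n)
    (w u p : ℤ → ℝ)
    (hw01 : ∀ n, w n ∈ Set.Ioo (0:ℝ) 1)
    (hwrec : ∀ n, w n = 1 / ((k (n+1) : ℝ) + w (n+1)))
    (hu01 : ∀ n, u n ∈ Set.Ioo (0:ℝ) 1)
    (hurec : ∀ n, u n = 1 / ((k n : ℝ) + u (n-1)))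
    (hp : ∀ n, 1 / (1 + p n) = u n)
    (a : ℤ → ℝ) (ha : ∀ l, a l = -(1 / (w l * (1 + p l))))
    (m n : ℕ) (hmn : m ≤ n) :
    1/2 ≤ w ((n:ℤ)-1) / w ((m:ℤ)-1) * (-1:ℝ)^(m+n) *
        ∏ l ∈ Finset.Icc (m:ℤ) ((n:ℤ)-1), a l ∧
    w ((n:ℤ)-1) / w ((m:ℤ)-1) * (-1:ℝ)^(m+n) *
        ∏ l ∈ Finset.Icc (m:ℤ) ((n:ℤ)-1), a l ≤ 2 := by
  obtain ⟨j, rfl⟩ := Nat.exists_eq_add_of_le hmn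
  set m₀ : ℤ := (m : ℤ) - 1
  have hk₁ : ∀ l, (1 : ℝ) ≤ k l := fun l => by exact_mod_cast hk l
  have hurec' : ∀ i : ℕ, u (m₀ + (i + 1 : ℕ)) * (k (m₀ + (i + 1 : ℕ)) + u (m₀ + i)) = 1 :=
    fun i => by
      rw [hurec, show m₀ + ((i + 1 : ℕ) : ℤ) - 1 = m₀ + i by push_cast; ring]
      exact one_div_mul_cancel (by linarith [hk₁ (m₀ + (i + 1 : ℕ)), (hu01 (m₀ + i)).1])
  have hwrec' : ∀ i : ℕ, w (m₀ + i) * (k (m₀ + (i + 1 : ℕ)) + w (m₀ + (i + 1 : ℕ))) = 1 :=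
    fun i => by
      rw [hwrec, show m₀ + (i : ℤ) + 1 = m₀ + ((i + 1 : ℕ) : ℤ) by push_cast; ring]
      exact one_div_mul_cancel
        (by linarith [hk₁ (m₀ + (i + 1 : ℕ)), (hw01 (m₀ + (i + 1 : ℕ))).1])
  have hbound := div_mul_prod_div_mem_Icc (c := fun i => (k (m₀ + (i + 1 : ℕ)) : ℝ))
    (fun i => hk₁ _) (fun i => Set.Ioo_subset_Icc_self (hu01 (m₀ + i)))
    (fun i => Set.Ioo_subset_Icc_self (hw01 (m₀ + i))) hurec' hwrec' j
  have ha' : ∀ l, a l = -(u l / w l) := fun l => by rw [ha, mul_comm, ← div_div, hp]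
  have hsign : (-1 : ℝ) ^ (m + (m + j)) * (-1) ^ j = 1 := by
    rw [← pow_add]; exact Even.neg_one_pow ⟨m + j, by ring⟩
  rw [show ((m + j : ℕ) : ℤ) - 1 = m₀ + j by push_cast; ring, ← Ioc_sub_one_left_eq_Icc,
    prod_Ioc_add_natCast]
  simp only [ha', prod_neg, card_range]
  rw [mul_assoc _ ((-1 : ℝ) ^ _), ← mul_assoc ((-1 : ℝ) ^ (m + (m + j))), hsign, one_mul]
  simpa only [Nat.cast_zero, add_zero, Set.mem_Icc] using hbound
end
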